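/- Every addition-based bidirectional SSM matrix of order N and size L is rank-characterized N-quasiseparable; that is, the mixer matrix obtained by summing a forward parametric semiseparable SSM and a reversed backward one is a quasiseparable matrix. -/
import Mathlib


open Matrix

/-- `Aprod A i j = A i * A (i-1) * ⋯ * A (j+1)`, the ordered product `A^×_{i:j}`;
it equals the identity when `i = j` (and also, by convention, when `i < j`). -/
def Aprod {N : ℕ} (A : ℕ → Matrix (Fin N) (Fin N) ℝ) : ℕ → ℕ → Matrix (Fin N) (Fin N) ℝ
  | 0, _ => 1
  | i + 1, j => if j ≤ i then A (i + 1) * Aprod A i j else 1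

/-- The parametric `N`-semiseparable `L × L` matrix with parameters `A, b, c`:
`S i j = cᵢᵀ A^×_{i:j} bⱼ` for `i ≥ j` and `0` for `i < j`. -/
def semisep (L : ℕ) {N : ℕ} (A : ℕ → Matrix (Fin N) (Fin N) ℝ)
    (b c : ℕ → Fin N → ℝ) : Matrix (Fin L) (Fin L) ℝ :=
  Matrix.of fun i j =>
    if (j : ℕ) ≤ (i : ℕ) then c (i : ℕ) ⬝ᵥ (Aprod A (i : ℕ) (j : ℕ)) *ᵥ b (j : ℕ) else 0
/-- The addition-based bidirectional SSM matrix of order `N` and size `L`: the sum of a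
forward parametric semiseparable SSM and a reversed backward one, with diagonal entries
`cfᵢᵀ bfᵢ + cbᵢᵀ bbᵢ`. -/
def addBidir (L : ℕ) {N : ℕ} (Af : ℕ → Matrix (Fin N) (Fin N) ℝ) (bf cf : ℕ → Fin N → ℝ)
    (Ab : ℕ → Matrix (Fin N) (Fin N) ℝ) (bb cb : ℕ → Fin N → ℝ) :
    Matrix (Fin L) (Fin L) ℝ :=
  Matrix.of fun i j =>
    if (j : ℕ) < (i : ℕ) then cf (i : ℕ) ⬝ᵥ (Aprod Af (i : ℕ) (j : ℕ)) *ᵥ bf (j : ℕ)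
    else if (i : ℕ) = (j : ℕ) then cf (i : ℕ) ⬝ᵥ bf (i : ℕ) + cb (i : ℕ) ⬝ᵥ bb (i : ℕ)
    else cb (j : ℕ) ⬝ᵥ (Aprod Ab (j : ℕ) (i : ℕ)) *ᵥ bb (i : ℕ)
/-- Rank characterization of `N`-quasiseparability: every submatrix taken strictly below the
diagonal has rank at most `N`, and every submatrix taken strictly above the diagonal has
rank at most `N`. -/
def RCQuasisep {L : ℕ} (N : ℕ) (M : Matrix (Fin L) (Fin L) ℝ) : Prop :=
  (∀ (p q : ℕ) (r : Fin p → Fin L) (s : Fin q → Fin L),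
      (∀ a b, (s b : ℕ) < (r a : ℕ)) →
      (Matrix.of fun a b => M (r a) (s b)).rank ≤ N) ∧
  (∀ (p q : ℕ) (r : Fin p → Fin L) (s : Fin q → Fin L),
      (∀ a b, (r a : ℕ) < (s b : ℕ)) →
      (Matrix.of fun a b => M (r a) (s b)).rank ≤ N)

lemma Aprod_self {N : ℕ} (A : ℕ → Matrix (Fin N) (Fin N) ℝ) (i : ℕ) : Aprod A i i = 1 := by
  cases i with
  | zero => rfl
  | succ k => simp [Aprod]

lemma Aprod_split {N : ℕ} (A : ℕ → Matrix (Fin N) (Fin N) ℝ) :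
    ∀ i t j, j ≤ t → t ≤ i → Aprod A i j = Aprod A i t * Aprod A t j := by
  intro i
  induction i with
  | zero =>
    intro t j hj ht
    interval_cases t
    interval_cases j
    simp [Aprod_self]
  | succ k ih =>
    intro t j hj ht
    rcases Nat.lt_or_ge t (k+1) with h | h
    · have ht' : t ≤ k := Nat.lt_succ_iff.mp h
      have hj' : j ≤ k := le_trans hj ht'
      show Aprod A (k+1) j = Aprod A (k+1) t * Aprod A t j
      simp only [Aprod, if_pos hj', if_pos ht']
      rw [ih t j hj ht', mul_assoc]
    · have : t = k+1 := le_antisymm ht h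
      subst this
      rw [Aprod_self, one_mul]

lemma rank_factor_le {p q N : ℕ} (U : Matrix (Fin p) (Fin N) ℝ) (V : Matrix (Fin N) (Fin q) ℝ) :
    (U * V).rank ≤ N :=
  le_trans (Matrix.rank_mul_le_left U V) (le_trans (Matrix.rank_le_card_width U) (by simp))

/-- Every addition-based bidirectional SSM matrix of order `N` and size `L`
(the sum of a forward parametric semiseparable SSM and a reversed backward one) is
rank-characterized `N`-quasiseparable. -/
theorem addBidir_is_rcQuasisep {L N : ℕ}
    (Af : ℕ → Matrix (Fin N) (Fin N) ℝ) (bf cf : ℕ → Fin N → ℝ)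
    (Ab : ℕ → Matrix (Fin N) (Fin N) ℝ) (bb cb : ℕ → Fin N → ℝ) :
    RCQuasisep N (addBidir L Af bf cf Ab bb cb) := by
  constructor
  · intro p q r s hrs
    cases q with
    | zero =>
      exact le_trans (Matrix.rank_le_card_width _) (by simp)
    | succ q' =>
      obtain ⟨b0, -, hb0⟩ := Finset.exists_max_image (Finset.univ : Finset (Fin (q'+1)))
        (fun b => (s b : ℕ)) ⟨⟨0, Nat.succ_pos _⟩, Finset.mem_univ _⟩
      set t : ℕ := (s b0 : ℕ) with ht
      have hM : (Matrix.of fun a b => addBidir L Af bf cf Ab bb cb (r a) (s b))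
          = (Matrix.of fun a k => (cf (r a : ℕ) ᵥ* Aprod Af (r a : ℕ) t) k) *
            (Matrix.of fun k b => (Aprod Af t (s b : ℕ) *ᵥ bf (s b : ℕ)) k) := by
        ext a b
        have h1 : (s b : ℕ) ≤ t := hb0 b (Finset.mem_univ b)
        have h2 : t ≤ (r a : ℕ) := le_of_lt (hrs a b0)
        simp only [Matrix.mul_apply, Matrix.of_apply, addBidir, if_pos (hrs a b)]
        rw [Aprod_split Af _ t _ h1 h2, ← Matrix.mulVec_mulVec, Matrix.dotProduct_mulVec]
        rfl
      rw [hM]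
      exact rank_factor_le _ _
  · intro p q r s hrs
    cases p with
    | zero =>
      exact le_trans (Matrix.rank_le_card_height _) (by simp)
    | succ p' =>
      obtain ⟨a0, -, ha0⟩ := Finset.exists_max_image (Finset.univ : Finset (Fin (p'+1)))
        (fun a => (r a : ℕ)) ⟨⟨0, Nat.succ_pos _⟩, Finset.mem_univ _⟩
      set t : ℕ := (r a0 : ℕ) with ht
      have hM : (Matrix.of fun a b => addBidir L Af bf cf Ab bb cb (r a) (s b))
          = (Matrix.of fun a k => (Aprod Ab t (r a : ℕ) *ᵥ bb (r a : ℕ)) k) *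
            (Matrix.of fun k b => (cb (s b : ℕ) ᵥ* Aprod Ab (s b : ℕ) t) k) := by
        ext a b
        have h1 : (r a : ℕ) ≤ t := ha0 a (Finset.mem_univ a)
        have h2 : t ≤ (s b : ℕ) := le_of_lt (hrs a0 b)
        have hne : ¬ ((s b : ℕ) < (r a : ℕ)) := by omega
        have hne2 : ¬ ((r a : ℕ) = (s b : ℕ)) := by have := hrs a b; omega
        simp only [Matrix.mul_apply, Matrix.of_apply, addBidir, if_neg hne, if_neg hne2]
        rw [Aprod_split Ab _ t _ h1 h2, ← Matrix.mulVec_mulVec, Matrix.dotProduct_mulVec]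
        rw [dotProduct_comm]
        rfl
      rw [hM]
      exact rank_factor_le _ _
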